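/- Let X ∈ ℝ^{m×n} have rank s, column space U, row space V, and let Ξ ∈ T_X M_{≤k} with decomposition Ξ = Ξ_s + Ξ_{k−s}, Ξ_s ∈ T_X M_s, Ξ_{k−s} ∈ U^⊥⊗V^⊥ of rank ≤ k−s. Then for every α ∈ ℝ, the matrices X + α((P_U ⊗ I)Ξ + Ξ_{k−s}) and X + α((I ⊗ P_V)Ξ + Ξ_{k−s}) have rank at most k. -/
import Mathlib


open Matrix
/-- Column space of a matrix. -/
def colSpace {m n : ℕ} (X : Matrix (Fin m) (Fin n) ℝ) : Set (Fin m → ℝ) :=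
  {y | ∃ v, X.mulVec v = y}

/-- Row space of a matrix. -/
def rowSpace {m n : ℕ} (X : Matrix (Fin m) (Fin n) ℝ) : Set (Fin n → ℝ) :=
  colSpace Xᵀ

/-- Orthogonal complement (w.r.t. the Euclidean dot product) of a set of vectors. -/
def perp {p : ℕ} (S : Set (Fin p → ℝ)) : Set (Fin p → ℝ) :=
  {x | ∀ u ∈ S, ∑ i, x i * u i = 0}

/-- `A ⊗ B`: matrices whose column space lies in `A` and row space lies in `B`. -/
def tensorSp {m n : ℕ} (A : Set (Fin m → ℝ)) (B : Set (Fin n → ℝ)) :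
    Set (Matrix (Fin m) (Fin n) ℝ) :=
  {Z | (∀ v, Z.mulVec v ∈ A) ∧ (∀ u, Zᵀ.mulVec u ∈ B)}

/-- Frobenius inner product. -/
noncomputable def frobInner {m n : ℕ} (A B : Matrix (Fin m) (Fin n) ℝ) : ℝ :=
  ∑ i, ∑ j, A i j * B i j

/-- Frobenius norm. -/
noncomputable def frobNorm {m n : ℕ} (A : Matrix (Fin m) (Fin n) ℝ) : ℝ :=
  Real.sqrt (frobInner A A)

/-- The tangent space `T_X M_s = (U⊗V) ⊕ (U^⊥⊗V) ⊕ (U⊗V^⊥)`, `U, V` column/row space of `X`. -/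
def tangentMs {m n : ℕ} (X : Matrix (Fin m) (Fin n) ℝ) : Set (Matrix (Fin m) (Fin n) ℝ) :=
  {Ξ | ∃ Z₁ ∈ tensorSp (colSpace X) (rowSpace X),
       ∃ Z₂ ∈ tensorSp (perp (colSpace X)) (rowSpace X),
       ∃ Z₃ ∈ tensorSp (colSpace X) (perp (rowSpace X)), Ξ = Z₁ + Z₂ + Z₃}

/-- Sequential tangent cone of a set of matrices, w.r.t. Frobenius distance. -/
def matTangentCone {m n : ℕ} (M : Set (Matrix (Fin m) (Fin n) ℝ))
    (X : Matrix (Fin m) (Fin n) ℝ) : Set (Matrix (Fin m) (Fin n) ℝ) :=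
  {Ξ | ∃ (Y : ℕ → Matrix (Fin m) (Fin n) ℝ) (a : ℕ → ℝ),
      (∀ i, Y i ∈ M) ∧ (∀ i, 0 < a i) ∧
      Filter.Tendsto (fun i => frobNorm (Y i - X)) Filter.atTop (nhds 0) ∧
      Filter.Tendsto (fun i => frobNorm (a i • (Y i - X) - Ξ)) Filter.atTop (nhds 0)}

/-- `P` is the orthogonal projector (symmetric idempotent matrix) onto `U`. -/
def IsOrthProjOnto {p : ℕ} (P : Matrix (Fin p) (Fin p) ℝ) (U : Set (Fin p → ℝ)) : Prop :=
  Pᵀ = P ∧ P * P = P ∧ colSpace P = U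


lemma rank_le_of_range_le {m n : ℕ} (A B : Matrix (Fin m) (Fin n) ℝ)
    (h : LinearMap.range A.mulVecLin ≤ LinearMap.range B.mulVecLin) :
    A.rank ≤ B.rank :=
  Submodule.finrank_mono h

lemma rank_smul_le {m n : ℕ} (α : ℝ) (A : Matrix (Fin m) (Fin n) ℝ) :
    (α • A).rank ≤ A.rank := by
  apply rank_le_of_range_le
  rintro y ⟨v, rfl⟩
  exact ⟨α • v, by simp [Matrix.mulVecLin_apply, Matrix.smul_mulVec, Matrix.mulVec_smul]⟩

lemma rank_add_le' {m n : ℕ} (A B : Matrix (Fin m) (Fin n) ℝ) :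
    (A + B).rank ≤ A.rank + B.rank := by
  have h : LinearMap.range (A + B).mulVecLin ≤
      LinearMap.range A.mulVecLin ⊔ LinearMap.range B.mulVecLin := by
    rintro y ⟨v, rfl⟩
    rw [Matrix.mulVecLin_apply, Matrix.add_mulVec]
    exact Submodule.add_mem_sup ⟨v, rfl⟩ ⟨v, rfl⟩
  exact (Submodule.finrank_mono h).trans (Submodule.finrank_add_le_finrank_add_finrank _ _)

/-- If every column-space vector of `A` lies in the column space of `X`,
then `X + A` has rank at most the rank of `X`. -/
lemma rank_add_le_of_col {m n : ℕ} (X A : Matrix (Fin m) (Fin n) ℝ)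
    (h : ∀ v, A.mulVec v ∈ colSpace X) : (X + A).rank ≤ X.rank := by
  apply rank_le_of_range_le
  rintro y ⟨v, rfl⟩
  obtain ⟨w, hw⟩ := h v
  refine ⟨v + w, ?_⟩
  rw [Matrix.mulVecLin_apply, Matrix.mulVecLin_apply, Matrix.add_mulVec, Matrix.mulVec_add, hw]

/-- With `Ξ = Ξ_s + Ξ_{k−s}`, `Ξ_s ∈ T_X M_s`, `Ξ_{k−s} ∈ U^⊥⊗V^⊥` of rank
`≤ k−s`, for every `α ∈ ℝ` the matrices `X + α(P_U Ξ + Ξ_{k−s})` and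
`X + α(Ξ P_V + Ξ_{k−s})` have rank at most `k`. -/
theorem stmt_10 {m n s k : ℕ} (X : Matrix (Fin m) (Fin n) ℝ)
    (hrank : X.rank = s) (hsk : s ≤ k)
    (PU : Matrix (Fin m) (Fin m) ℝ) (PV : Matrix (Fin n) (Fin n) ℝ)
    (hPU : IsOrthProjOnto PU (colSpace X)) (hPV : IsOrthProjOnto PV (rowSpace X))
    (Ξs Ξk : Matrix (Fin m) (Fin n) ℝ)
    (hΞs : Ξs ∈ tangentMs X)
    (hΞk : Ξk ∈ tensorSp (perp (colSpace X)) (perp (rowSpace X)))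
    (hΞkrk : Ξk.rank ≤ k - s)
    (Ξ : Matrix (Fin m) (Fin n) ℝ) (hΞ : Ξ = Ξs + Ξk) :
    ∀ α : ℝ, (X + α • (PU * Ξ + Ξk)).rank ≤ k ∧ (X + α • (Ξ * PV + Ξk)).rank ≤ k := by
  intro α
  obtain ⟨hPUsym, _, hPUcol⟩ := hPU
  obtain ⟨hPVsym, _, hPVcol⟩ := hPV
  have hsum : ∀ M : Matrix (Fin m) (Fin n) ℝ,
      (X + α • M).rank ≤ s → (X + α • (M + Ξk)).rank ≤ k := by
    intro M hM
    have : X + α • (M + Ξk) = (X + α • M) + α • Ξk := by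
      rw [smul_add, ← add_assoc]
    rw [this]
    calc ((X + α • M) + α • Ξk).rank ≤ (X + α • M).rank + (α • Ξk).rank := rank_add_le' _ _
      _ ≤ s + (k - s) := add_le_add hM ((rank_smul_le α Ξk).trans hΞkrk)
      _ = k := Nat.add_sub_cancel' hsk
  constructor
  · apply hsum
    rw [← hrank]
    apply rank_add_le_of_col
    intro v
    rw [Matrix.smul_mulVec, ← Matrix.mulVec_mulVec]
    have : PU.mulVec (Ξ.mulVec v) ∈ colSpace X := hPUcol ▸ ⟨Ξ.mulVec v, rfl⟩
    obtain ⟨w, hw⟩ := this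
    exact ⟨α • w, by rw [Matrix.mulVec_smul, hw]⟩
  · apply hsum
    have := Matrix.rank_transpose (X + α • (Ξ * PV))
    rw [← this, Matrix.transpose_add, Matrix.transpose_smul, Matrix.transpose_mul, hPVsym,
      ← hrank, ← Matrix.rank_transpose X]
    apply rank_add_le_of_col
    intro v
    rw [Matrix.smul_mulVec, ← Matrix.mulVec_mulVec]
    have : PV.mulVec (Ξᵀ.mulVec v) ∈ colSpace Xᵀ := by
      have h1 : PV.mulVec (Ξᵀ.mulVec v) ∈ rowSpace X := hPVcol ▸ ⟨Ξᵀ.mulVec v, rfl⟩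
      exact h1
    obtain ⟨w, hw⟩ := this
    exact ⟨α • w, by rw [Matrix.mulVec_smul, hw]⟩
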